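/- In the jittered-sampling setting above, if additionally diam(A_j) ≤ C·N^{-1/D} for each j and σ(B(x,r) △ B(y,r)) ≤ C'·θ(x,y)·s(r) with s(r) ≤ C''·r^{D-1}, then the expected number variance satisfies V ≤ (C·C'·C''/2)·N^{1-1/D}·r^{D-1}. -/
import Mathlib


open Real MeasureTheory Filter Asymptotics Metric

/-- Jittered sampling bound: if additionally `diam(A_j) ≤ C·N^{-1/D}` and
`σ(B(x,r) △ B(y,r)) ≤ C'·θ(x,y)·s(r)` with `s(r) ≤ C''·r^{D-1}`, then the expected number
variance `V = ½ ∑_i ∫_{A_i}∫_{A_i} σ(B(x,r)△B(y,r)) dσ_i dσ_i` satisfies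
`V ≤ (C·C'·C''/2)·N^{1-1/D}·r^{D-1}`. -/
theorem jittered_sampling_variance_bound {X : Type*} [MetricSpace X] [CompactSpace X]
    [MeasurableSpace X] [BorelSpace X]
    (μ : Measure X) [IsProbabilityMeasure μ]
    (hhom : ∀ (x y : X) (ρ : ℝ), μ (Metric.ball x ρ) = μ (Metric.ball y ρ))
    (N : ℕ) (hN : 1 ≤ N) (A : Fin N → Set X)
    (hmeas : ∀ j, MeasurableSet (A j))
    (hdisj : Pairwise (Function.onFun Disjoint A))
    (hcover : (⋃ j, A j) = Set.univ)
    (harea : ∀ j, μ (A j) = (N : ENNReal)⁻¹)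
    (D : ℝ) (hD : 0 < D) (s : ℝ → ℝ)
    (C C' C'' : ℝ) (hC : 0 < C) (hC' : 0 < C') (hC'' : 0 < C'')
    (hdiam : ∀ j, Metric.diam (A j) ≤ C * (N : ℝ) ^ (-(1 : ℝ) / D))
    (r : ℝ) (hr : 0 < r)
    (hsd : ∀ x y : X,
      (μ (symmDiff (Metric.ball x r) (Metric.ball y r))).toReal ≤ C' * dist x y * s r)
    (hsr : s r ≤ C'' * r ^ (D - 1)) :
    (1 / 2) * ∑ i, ∫ x, ∫ y,
        (μ (symmDiff (Metric.ball x r) (Metric.ball y r))).toReal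
          ∂((N : NNReal) • μ.restrict (A i)) ∂((N : NNReal) • μ.restrict (A i))
      ≤ (C * C' * C'' / 2) * (N : ℝ) ^ (1 - 1 / D) * r ^ (D - 1) := by
  have hNR : (0:ℝ) < N := by exact_mod_cast hN
  have hrD : (0:ℝ) ≤ r ^ (D - 1) := Real.rpow_nonneg hr.le _
  set d : ℝ := C * (N : ℝ) ^ (-(1:ℝ)/D) with hd
  have hd0 : 0 ≤ d := by positivity
  set K : ℝ := C' * d * (C'' * r ^ (D-1)) with hK
  have hK0 : 0 ≤ K := by positivity
  set g : X → X → ℝ := fun x y =>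
    (μ (symmDiff (Metric.ball x r) (Metric.ball y r))).toReal with hg
  have hg0 : ∀ x y, 0 ≤ g x y := fun x y => ENNReal.toReal_nonneg
  have hbound : ∀ i : Fin N, ∀ x ∈ A i, ∀ y ∈ A i, g x y ≤ K := by
    intro i x hx y hy
    have hdist : dist x y ≤ d :=
      le_trans (Metric.dist_le_diam_of_mem
        (isCompact_univ.isBounded.subset (Set.subset_univ _)) hx hy) (hdiam i)
    calc g x y ≤ C' * dist x y * s r := hsd x y
      _ ≤ C' * dist x y * (C'' * r ^ (D-1)) :=
          mul_le_mul_of_nonneg_left hsr (by positivity)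
      _ ≤ C' * d * (C'' * r ^ (D-1)) := by
          have : C' * dist x y ≤ C' * d := mul_le_mul_of_nonneg_left hdist hC'.le
          exact mul_le_mul_of_nonneg_right this (by positivity)
  set ν : Fin N → Measure X := fun i => (N : NNReal) • μ.restrict (A i) with hν
  have hν1 : ∀ i, ν i Set.univ = 1 := by
    intro i
    have : ν i Set.univ = (N : ENNReal) * μ (A i) := by
      simp [hν, Measure.smul_apply, ENNReal.smul_def]
    have hN0 : (N : ENNReal) ≠ 0 := Nat.cast_ne_zero.mpr (by omega)
    rw [this, harea i, ENNReal.mul_inv_cancel hN0 (ENNReal.natCast_ne_top N)]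
  haveI hfin : ∀ i, IsFiniteMeasure (ν i) := fun i =>
    ⟨by rw [hν1 i]; exact ENNReal.one_lt_top⟩
  have hmem : ∀ i, ∀ᵐ x ∂(ν i), x ∈ A i := fun i =>
    Measure.ae_smul_measure (ae_restrict_mem (hmeas i)) _
  have houter : ∀ i : Fin N, (∫ x, ∫ y, g x y ∂(ν i) ∂(ν i)) ≤ K := by
    intro i
    have hinner : ∀ x ∈ A i, ‖∫ y, g x y ∂(ν i)‖ ≤ K := by
      intro x hx
      have h1 : ‖∫ y, g x y ∂(ν i)‖ ≤ K * (ν i Set.univ).toReal := by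
        refine norm_integral_le_of_norm_le_const ?_
        filter_upwards [hmem i] with y hy
        rw [Real.norm_of_nonneg (hg0 x y)]
        exact hbound i x hx y hy
      simpa [hν1 i] using h1
    have h2 : ‖∫ x, ∫ y, g x y ∂(ν i) ∂(ν i)‖ ≤ K * (ν i Set.univ).toReal := by
      refine norm_integral_le_of_norm_le_const ?_
      filter_upwards [hmem i] with x hx
      rw [Real.norm_of_nonneg (integral_nonneg (fun y => hg0 x y))]
      simpa [Real.norm_of_nonneg (integral_nonneg (fun y => hg0 x y))] using hinner x hx
    calc (∫ x, ∫ y, g x y ∂(ν i) ∂(ν i)) ≤ ‖∫ x, ∫ y, g x y ∂(ν i) ∂(ν i)‖ :=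
          le_abs_self _
      _ ≤ K * (ν i Set.univ).toReal := h2
      _ = K := by simp [hν1 i]
  have hsum : (∑ i, ∫ x, ∫ y, g x y ∂(ν i) ∂(ν i)) ≤ N * K := by
    calc (∑ i, ∫ x, ∫ y, g x y ∂(ν i) ∂(ν i)) ≤ ∑ _i : Fin N, K :=
          Finset.sum_le_sum (fun i _ => houter i)
      _ = N * K := by simp [mul_comm]
  have hfinal : (1/2 : ℝ) * (N * K) = (C * C' * C'' / 2) * (N : ℝ) ^ (1 - 1/D) * r ^ (D - 1) := by
    have hpow : (N : ℝ) ^ ((1:ℝ) - 1/D) = (N : ℝ) * (N : ℝ) ^ (-(1:ℝ)/D) := by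
      rw [show (1:ℝ) - 1/D = 1 + (-(1:ℝ)/D) by ring, Real.rpow_add hNR, Real.rpow_one]
    rw [hK, hd, hpow]; ring
  have hgoal : (1/2 : ℝ) * ∑ i, ∫ x, ∫ y, g x y ∂(ν i) ∂(ν i)
      ≤ (C * C' * C'' / 2) * (N : ℝ) ^ (1 - 1/D) * r ^ (D - 1) := by
    rw [← hfinal]; linarith
  exact hgoal
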